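/- Let k ≥ 1 be an integer and let H ⊆ ℤ^k ∖ {0}. Then γ(H) ≤ δ(H). -/

import Mathlib

/-!
Fix `ξ`, let `g` be the infimum of `‖h·ξ‖` over `h ∈ H`, and suppose `g > 0`. The tent function of
half-width `g` has nonnegative cosine coefficients `w n` with `w 0 = g` and `∑ w n = 1`, and its
expansion `∑ w n cos(2π n θ)` vanishes when `‖θ‖ ≥ g`. For an admissible `T` with constant term
`a₀`, `∑ w n T(n ξ) = a₀` because every frequency `h ∈ H'` is killed; all terms are nonnegative and
the `n = 0` term is `g T(0) = g`, so `g ≤ a₀`. The degenerate cases only need `a₀ ≥ 0`, which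
follows by averaging `T` over the grid `(ℤ/N)^k` for `N` larger than every coordinate of every
`h ∈ H'`.
-/

/-- Distance from a real number to the nearest integer. -/
noncomputable def nearestIntDist (x : ℝ) : ℝ := |x - round x|

open Real Finset Complex

lemma hasSum_cos_div_sq {x : ℝ} (hx : x ∈ Set.Icc (0 : ℝ) 1) :
    HasSum (fun n : ℕ => 1 / (n : ℝ) ^ 2 * Real.cos (2 * π * n * x))
      (π ^ 2 * (x ^ 2 - x + 1 / 6)) := by
  have h := hasSum_one_div_nat_pow_mul_cos one_ne_zero hx
  have hB : (Polynomial.map (algebraMap ℚ ℝ) (Polynomial.bernoulli 2)).eval x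
      = x ^ 2 - x + 1 / 6 := by
    simp [Polynomial.bernoulli, sum_range_succ, bernoulli, bernoulli'_two]
    ring
  rwa [mul_one, hB, show (-1 : ℝ) ^ (1 + 1) * (2 * π) ^ 2 / 2 / ((Nat.factorial 2 : ℕ) : ℝ) = π ^ 2
    by norm_num [Nat.factorial]; ring] at h

/-- Fourier cosine coefficients of the `1`-periodic tent function that equals `1 - |x| / g`
for `|x| ≤ g` and vanishes at distance `≥ g` from `ℤ`. -/
noncomputable def tentCoeff (g : ℝ) (n : ℕ) : ℝ :=
  if n = 0 then g else (1 - Real.cos (2 * π * n * g)) / (π ^ 2 * n ^ 2 * g)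

lemma tentCoeff_nonneg {g : ℝ} (hg : 0 ≤ g) (n : ℕ) : 0 ≤ tentCoeff g n := by
  unfold tentCoeff
  split_ifs
  · exact hg
  · exact div_nonneg (sub_nonneg.2 (Real.cos_le_one _)) (by positivity)

lemma hasSum_tentCoeff {g : ℝ} (hg : 0 < g) (hg₂ : g ≤ 1 / 2) : HasSum (tentCoeff g) 1 := by
  have h₀ := hasSum_cos_div_sq (x := 0) ⟨le_rfl, zero_le_one⟩
  have h_g := hasSum_cos_div_sq (x := g) ⟨hg.le, by linarith⟩
  have key := ((h₀.sub h_g).div_const (π ^ 2 * g)).add (hasSum_ite_eq 0 g)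
  rw [show (π ^ 2 * (0 ^ 2 - 0 + 1 / 6) - π ^ 2 * (g ^ 2 - g + 1 / 6)) / (π ^ 2 * g) + g = 1 by
    field_simp; ring] at key
  refine key.congr_fun fun n => ?_
  rcases eq_or_ne n 0 with rfl | hn
  · simp [tentCoeff]
  · have : (n : ℝ) ≠ 0 := Nat.cast_ne_zero.2 hn
    simp only [tentCoeff, if_neg hn, mul_zero, Real.cos_zero, mul_one, add_zero]
    field_simp

lemma hasSum_tentCoeff_mul_cos {g u : ℝ} (hg : 0 < g) (hgu : g ≤ u) (hug : u ≤ 1 - g) :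
    HasSum (fun n => tentCoeff g n * Real.cos (2 * π * n * u)) 0 := by
  have hu := hasSum_cos_div_sq (x := u) ⟨by linarith, by linarith⟩
  have hr := hasSum_cos_div_sq (x := u + g) ⟨by linarith, by linarith⟩
  have hl := hasSum_cos_div_sq (x := u - g) ⟨by linarith, by linarith⟩
  -- the tent centred at `0` is a second difference of the periodised `B₂`, taken at `u`
  have key := ((hu.sub ((hr.add hl).div_const 2)).div_const (π ^ 2 * g)).add (hasSum_ite_eq 0 g)
  rw [show (π ^ 2 * (u ^ 2 - u + 1 / 6) - (π ^ 2 * ((u + g) ^ 2 - (u + g) + 1 / 6) +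
      π ^ 2 * ((u - g) ^ 2 - (u - g) + 1 / 6)) / 2) / (π ^ 2 * g) + g = 0 by
    field_simp; ring] at key
  refine key.congr_fun fun n => ?_
  rcases eq_or_ne n 0 with rfl | hn
  · simp [tentCoeff]
  · have : (n : ℝ) ≠ 0 := Nat.cast_ne_zero.2 hn
    simp only [tentCoeff, if_neg hn, add_zero, mul_add, mul_sub, Real.cos_add, Real.cos_sub]
    field_simp
    ring

lemma cos_two_pi_nat_mul_fract (n : ℕ) (x : ℝ) :
    Real.cos (2 * π * n * Int.fract x) = Real.cos (2 * π * n * x) := by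
  rw [Int.fract, show 2 * π * n * (x - ⌊x⌋) = 2 * π * n * x + ((-n * ⌊x⌋ : ℤ) : ℝ) * (2 * π) by
    push_cast; ring, Real.cos_add_int_mul_two_pi]

lemma nearestIntDist_nonneg (x : ℝ) : 0 ≤ nearestIntDist x := abs_nonneg _

lemma nearestIntDist_le_half (x : ℝ) : nearestIntDist x ≤ 1 / 2 := abs_sub_round x

lemma le_fract_of_le_nearestIntDist {g x : ℝ} (h : g ≤ nearestIntDist x) :
    g ≤ Int.fract x ∧ Int.fract x ≤ 1 - g := by
  rw [nearestIntDist, abs_sub_round_eq_min, le_min_iff] at h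
  exact ⟨h.1, by linarith [h.2]⟩

lemma hasSum_tentCoeff_mul_cos_of_le_nearestIntDist {g x : ℝ} (hg : 0 < g)
    (hx : g ≤ nearestIntDist x) :
    HasSum (fun n => tentCoeff g n * Real.cos (2 * π * n * x)) 0 := by
  obtain ⟨h₁, h₂⟩ := le_fract_of_le_nearestIntDist hx
  simpa only [cos_two_pi_nat_mul_fract] using hasSum_tentCoeff_mul_cos hg h₁ h₂

lemma geom_sum_eq_zero_of_pow_eq_one {K : Type*} [DivisionRing K] {z : K} {N : ℕ} (hz : z ≠ 1)
    (hzN : z ^ N = 1) : ∑ j ∈ range N, z ^ j = 0 := by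
  rw [geom_sum_eq hz, hzN, sub_self, zero_div]

lemma sum_range_cexp_eq_zero {N : ℕ} {m : ℤ} (hm : ¬ (N : ℤ) ∣ m) :
    ∑ j ∈ range N, cexp (j * (m * (2 * π * I / N))) = 0 := by
  rcases eq_or_ne N 0 with rfl | hN
  · simp
  have hζ := isPrimitiveRoot_exp N hN
  simp_rw [Complex.exp_nat_mul, Complex.exp_int_mul]
  refine geom_sum_eq_zero_of_pow_eq_one (by rwa [Ne, hζ.zpow_eq_one_iff_dvd]) ?_
  rw [← zpow_natCast, ← zpow_mul, mul_comm m, zpow_mul, zpow_natCast, hζ.pow_eq_one, one_zpow]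

variable {ι : Type*} [Fintype ι]

lemma sum_piFinset_cos_eq_zero [DecidableEq ι] {N : ℕ} {h : ι → ℤ} {i₀ : ι}
    (hi₀ : ¬ (N : ℤ) ∣ h i₀) :
    ∑ x ∈ Fintype.piFinset fun _ : ι => range N,
      Real.cos (2 * π * ∑ i, (h i : ℝ) * (x i / N)) = 0 := by
  have hcos : ∀ x : ι → ℕ, Real.cos (2 * π * ∑ i, (h i : ℝ) * (x i / N))
      = (∏ i, cexp (x i * (h i * (2 * π * I / N)))).re := by
    intro x
    rw [← Complex.exp_sum, ← Complex.exp_ofReal_mul_I_re]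
    congr 2
    push_cast
    rw [mul_sum, sum_mul]
    refine sum_congr rfl fun i _ => ?_
    ring
  simp_rw [hcos, ← Complex.re_sum]
  rw [sum_prod_piFinset (range N) fun i (j : ℕ) => cexp (j * (h i * (2 * π * I / N))),
    prod_eq_zero (mem_univ i₀) (sum_range_cexp_eq_zero hi₀), Complex.zero_re]

noncomputable def cosPoly (a₀ : ℝ) (H' : Finset (ι → ℤ)) (a : (ι → ℤ) → ℝ) (x : ι → ℝ) : ℝ :=
  a₀ + ∑ h ∈ H', a h * Real.cos (2 * π * ∑ i, (h i : ℝ) * x i)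

lemma nonneg_of_cosPoly_nonneg {a₀ : ℝ} {H' : Finset (ι → ℤ)} {a : (ι → ℤ) → ℝ}
    (hH' : ∀ h ∈ H', h ≠ 0) (hT : ∀ x, 0 ≤ cosPoly a₀ H' a x) : 0 ≤ a₀ := by
  classical
  set N := H'.sup (fun h => univ.sup fun i => (h i).natAbs) + 1
  have hN : ∀ h ∈ H', ∃ i, ¬ (N : ℤ) ∣ h i := by
    intro h hh
    obtain ⟨i, hi⟩ := Function.ne_iff.1 (hH' h hh)
    refine ⟨i, fun hdvd => hi (Int.eq_zero_of_dvd_of_natAbs_lt_natAbs hdvd ?_)⟩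
    have hle := (le_sup (f := fun i => (h i).natAbs) (mem_univ i)).trans
      (le_sup (f := fun h => univ.sup fun i => (h i).natAbs) hh)
    simp only [Int.natAbs_natCast]
    omega
  set P := Fintype.piFinset fun _ : ι => range N
  have hP : 0 < #P := by simp [P, Fintype.card_piFinset, N]
  have hsum : ∑ x ∈ P, cosPoly a₀ H' a (fun i => x i / N) = #P * a₀ := by
    simp only [cosPoly, sum_add_distrib, sum_const, nsmul_eq_mul, add_eq_left]
    rw [sum_comm]
    refine sum_eq_zero fun h hh => ?_
    obtain ⟨i₀, hi₀⟩ := hN h hh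
    rw [← mul_sum, sum_piFinset_cos_eq_zero hi₀, mul_zero]
  have hsum_nonneg : 0 ≤ ∑ x ∈ P, cosPoly a₀ H' a (fun i => x i / N) :=
    sum_nonneg fun x _ => hT _
  exact nonneg_of_mul_nonneg_right (hsum ▸ hsum_nonneg) (by exact_mod_cast hP)

lemma cosPoly_nat_mul (a₀ : ℝ) (H' : Finset (ι → ℤ)) (a : (ι → ℤ) → ℝ) (n : ℕ) (ξ : ι → ℝ) :
    cosPoly a₀ H' a (fun i => n * ξ i)
      = a₀ + ∑ h ∈ H', a h * Real.cos (2 * π * n * ∑ i, (h i : ℝ) * ξ i) := by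
  simp only [cosPoly]
  congr 1
  refine sum_congr rfl fun h _ => ?_
  rw [mul_sum, mul_sum]
  congr 2
  exact sum_congr rfl fun i _ => by ring

lemma le_of_le_nearestIntDist {a₀ g : ℝ} {H' : Finset (ι → ℤ)} {a : (ι → ℤ) → ℝ} {ξ : ι → ℝ}
    (hg : 0 < g) (hg₂ : g ≤ 1 / 2) (hT : ∀ x, 0 ≤ cosPoly a₀ H' a x)
    (hT₀ : a₀ + ∑ h ∈ H', a h = 1) (hξ : ∀ h ∈ H', g ≤ nearestIntDist (∑ i, (h i : ℝ) * ξ i)) :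
    g ≤ a₀ := by
  have hsum : HasSum (fun n : ℕ => tentCoeff g n * cosPoly a₀ H' a (fun i => n * ξ i)) a₀ := by
    have hsplit := ((hasSum_tentCoeff hg hg₂).mul_right a₀).add <| hasSum_sum fun h hh =>
      (hasSum_tentCoeff_mul_cos_of_le_nearestIntDist hg (hξ h hh)).mul_left (a h)
    simp only [one_mul, mul_zero, sum_const_zero, add_zero] at hsplit
    refine hsplit.congr_fun fun n => ?_
    rw [cosPoly_nat_mul, mul_add, mul_sum]
    congr 1
    exact sum_congr rfl fun h _ => by ring
  have h₀ := le_hasSum hsum 0 fun n _ => mul_nonneg (tentCoeff_nonneg hg.le n) (hT _)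
  simpa [cosPoly, tentCoeff, hT₀] using h₀

lemma sInf_nearestIntDist_le {a₀ : ℝ} {H : Set (ι → ℤ)} {H' : Finset (ι → ℤ)}
    {a : (ι → ℤ) → ℝ} (hH : 0 ∉ H) (hH' : ↑H' ⊆ H) (hT : ∀ x, 0 ≤ cosPoly a₀ H' a x)
    (hT₀ : a₀ + ∑ h ∈ H', a h = 1) (ξ : ι → ℝ) :
    sInf {t : ℝ | ∃ h ∈ H, t = nearestIntDist (∑ i, (h i : ℝ) * ξ i)} ≤ a₀ := by
  have ha₀ : 0 ≤ a₀ := nonneg_of_cosPoly_nonneg (fun h hh h0 => hH (h0 ▸ hH' hh)) hT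
  set S := {t : ℝ | ∃ h ∈ H, t = nearestIntDist (∑ i, (h i : ℝ) * ξ i)}
  have hS₀ : ∀ t ∈ S, 0 ≤ t := by
    rintro _ ⟨h, -, rfl⟩
    exact nearestIntDist_nonneg _
  have hS_le : ∀ h ∈ H, sInf S ≤ nearestIntDist (∑ i, (h i : ℝ) * ξ i) :=
    fun h hh => csInf_le ⟨0, hS₀⟩ ⟨h, hh, rfl⟩
  rcases S.eq_empty_or_nonempty with hS | hS
  · rwa [hS, Real.sInf_empty]
  rcases (le_csInf hS hS₀).eq_or_lt with hg | hg
  · rwa [← hg]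
  obtain ⟨_, h, hh, rfl⟩ := hS
  exact le_of_le_nearestIntDist hg ((hS_le h hh).trans (nearestIntDist_le_half _)) hT hT₀
    fun h' hh' => hS_le h' (hH' hh')

theorem stmt_0_general (k : ℕ) (H : Set (Fin k → ℤ))
    (hH : (0 : Fin k → ℤ) ∉ H) :
    sSup {g : ℝ | ∃ ξ : Fin k → ℝ,
        g = sInf {t : ℝ | ∃ h ∈ H, t = nearestIntDist (∑ i, (h i : ℝ) * ξ i)}} ≤
    sInf {a₀ : ℝ | ∃ (H' : Finset (Fin k → ℤ)) (a : (Fin k → ℤ) → ℝ),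
        ↑H' ⊆ H ∧
        (∀ x : Fin k → ℝ,
          0 ≤ a₀ + ∑ h ∈ H', a h * Real.cos (2 * Real.pi * ∑ i, (h i : ℝ) * x i)) ∧
        a₀ + ∑ h ∈ H', a h = 1} := by
  refine csSup_le ⟨_, 0, rfl⟩ ?_
  rintro _ ⟨ξ, rfl⟩
  refine le_csInf ⟨1, ∅, 0, by simp, by simp, by simp⟩ ?_
  rintro a₀ ⟨H', a, hH', hT, hT₀⟩
  exact sInf_nearestIntDist_le hH hH' hT hT₀ ξ

/-- Let `k ≥ 1` and `H ⊆ ℤ^k ∖ {0}`. Then `γ(H) ≤ δ(H)`, where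
`δ(H)` is the infimum of constant terms `a₀` of nonnegative trigonometric
polynomials `T(x) = a₀ + Σ_{h ∈ H'} a_h cos(2π h·x)` (with `H'` a finite subset
of `H`) normalized by `T(0) = 1`, and
`γ(H) = sup_{ξ ∈ ℝ^k} inf_{h ∈ H} ‖h·ξ‖`. -/
theorem stmt_0 (k : ℕ) (hk : 1 ≤ k) (H : Set (Fin k → ℤ))
    (hH : (0 : Fin k → ℤ) ∉ H) :
    sSup {g : ℝ | ∃ ξ : Fin k → ℝ,
        g = sInf {t : ℝ | ∃ h ∈ H, t = nearestIntDist (∑ i, (h i : ℝ) * ξ i)}} ≤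
    sInf {a₀ : ℝ | ∃ (H' : Finset (Fin k → ℤ)) (a : (Fin k → ℤ) → ℝ),
        ↑H' ⊆ H ∧
        (∀ x : Fin k → ℝ,
          0 ≤ a₀ + ∑ h ∈ H', a h * Real.cos (2 * Real.pi * ∑ i, (h i : ℝ) * x i)) ∧
        a₀ + ∑ h ∈ H', a h = 1} :=
  stmt_0_general k H hH
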